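/- Let (E,P) be a random locally convex module, x ∈ E, and G ⊆ E a nonempty subset having the countable concatenation property. Then the following are equivalent: (1) x is in the T_c-closure of G; (2) x is in the (ε,λ)-topology closure of G; (3) d*(x,G) = 0. In particular, a subset of E with the countable concatenation property is T_c-closed if and only if it is closed in the (ε,λ)-topology. -/

import Mathlib

open MeasureTheory

section Preamble

variable {Ω : Type*} [MeasurableSpace Ω] {μ : Measure Ω}

/-- `L⁰(F,𝕜)` is a commutative ring under the pointwise operations. -/
noncomputable instance L0.instCommRing {𝕜 : Type*} [RCLike 𝕜] : CommRing (Ω →ₘ[μ] 𝕜) :=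
  { (inferInstance : AddCommGroup (Ω →ₘ[μ] 𝕜)),
    (inferInstance : CommMonoid (Ω →ₘ[μ] 𝕜)) with
    left_distrib := fun f g h => AEEqFun.toGerm_injective <| by
      simp only [AEEqFun.mul_toGerm, AEEqFun.add_toGerm, mul_add]
    right_distrib := fun f g h => AEEqFun.toGerm_injective <| by
      simp only [AEEqFun.mul_toGerm, AEEqFun.add_toGerm, add_mul]
    zero_mul := fun f => AEEqFun.toGerm_injective <| by
      simp only [AEEqFun.mul_toGerm, AEEqFun.zero_toGerm, zero_mul]
    mul_zero := fun f => AEEqFun.toGerm_injective <| by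
      simp only [AEEqFun.mul_toGerm, AEEqFun.zero_toGerm, mul_zero] }

/-- The indicator function of a measurable set `A`, as an element of `L⁰(F,𝕜)`. -/
noncomputable def L0.ind (μ : Measure Ω) (𝕜 : Type*) [RCLike 𝕜] (A : Set Ω)
    (_hA : MeasurableSet A) : Ω →ₘ[μ] 𝕜 :=
  AEEqFun.mk (A.indicator fun _ => (1 : 𝕜))
    (stronglyMeasurable_const.indicator _hA).aestronglyMeasurable

/-- The pointwise modulus `|ξ|` of an element of `L⁰(F,𝕜)`, as an element of `L⁰(F,ℝ)`. -/
noncomputable def L0.abs {𝕜 : Type*} [RCLike 𝕜] (ξ : Ω →ₘ[μ] 𝕜) : Ω →ₘ[μ] ℝ :=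
  AEEqFun.comp (fun z => ‖z‖) continuous_norm ξ

/-- An element of `L⁰(F,ℝ)` is strictly positive on `Ω`, i.e. lies in `L⁰₊₊`. -/
def L0.StrPos (ξ : Ω →ₘ[μ] ℝ) : Prop := ∀ᵐ ω ∂μ, 0 < ξ ω

/-- A countable measurable partition of `Ω`. -/
structure IsMeasPartition {Ω : Type*} [MeasurableSpace Ω] (A : ℕ → Set Ω) : Prop where
  meas : ∀ n, MeasurableSet (A n)
  disj : Pairwise (Function.onFun Disjoint A)
  cover : (⋃ n, A n) = Set.univ

variable {𝕜 : Type*} [RCLike 𝕜] {E : Type*} [AddCommGroup E] [Module (Ω →ₘ[μ] 𝕜) E]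
  {ι : Type*}

/-- `(E, ν)` is a random locally convex module over `𝕜` with base `(Ω,F,P)`: `ν` is a
separating family of `L⁰`-seminorms on the `L⁰(F,𝕜)`-module `E`. -/
structure IsRLCModule (𝕜 : Type*) [RCLike 𝕜] {Ω : Type*} [MeasurableSpace Ω] {μ : Measure Ω}
    {E : Type*} [AddCommGroup E] [Module (Ω →ₘ[μ] 𝕜) E] {ι : Type*} (ν : ι → E → Ω →ₘ[μ] ℝ) : Prop where
  nonneg : ∀ i x, 0 ≤ ν i x
  smul : ∀ i (ξ : Ω →ₘ[μ] 𝕜) x, ν i (ξ • x) = L0.abs ξ * ν i x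
  add_le : ∀ i x y, ν i (x + y) ≤ ν i x + ν i y
  separating : ∀ x, (∀ i, ν i x = 0) → x = 0

/-- `(E, n)` is a random normed module over `𝕜` with base `(Ω,F,P)`. -/
structure IsRNModule (𝕜 : Type*) [RCLike 𝕜] {Ω : Type*} [MeasurableSpace Ω] {μ : Measure Ω}
    {E : Type*} [AddCommGroup E] [Module (Ω →ₘ[μ] 𝕜) E] (n : E → Ω →ₘ[μ] ℝ) : Prop where
  nonneg : ∀ x, 0 ≤ n x
  smul : ∀ (ξ : Ω →ₘ[μ] 𝕜) x, n (ξ • x) = L0.abs ξ * n x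
  add_le : ∀ x y, n (x + y) ≤ n x + n y
  definite : ∀ x, n x = 0 → x = 0

/-- `‖x‖_Q`, the `L⁰`-seminorm associated with a finite nonempty subfamily `Q ⊆ P`. -/
noncomputable def nQ (ν : ι → E → Ω →ₘ[μ] ℝ) (Q : Finset ι) (hQ : Q.Nonempty) (x : E) :
    Ω →ₘ[μ] ℝ :=
  Q.sup' hQ fun i => ν i x

/-- The neighbourhood filter of a point in the locally `L⁰`-convex topology `T_c`,
generated by the balls `x + B_Q(ε)` with `Q` finite and `ε ∈ L⁰₊₊`. -/
noncomputable def tcNhd (ν : ι → E → Ω →ₘ[μ] ℝ) (x : E) : Filter E :=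
  ⨅ (Q : {Q : Finset ι // Q.Nonempty}) (ε : {ε : Ω →ₘ[μ] ℝ // L0.StrPos ε}),
    Filter.principal {y | nQ ν Q.1 Q.2 (y - x) ≤ ε.1}

/-- The locally `L⁰`-convex topology `T_c` on `E` induced by the family `ν`. -/
noncomputable def tcTop (ν : ι → E → Ω →ₘ[μ] ℝ) : TopologicalSpace E :=
  .mkOfNhds (tcNhd ν)

/-- The neighbourhood filter of a point in the `(ε,λ)`-topology, generated by the
neighbourhoods `x + N(Q,ε,λ)`. -/
noncomputable def elNhd (ν : ι → E → Ω →ₘ[μ] ℝ) (x : E) : Filter E :=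
  ⨅ (Q : {Q : Finset ι // Q.Nonempty}) (e : {e : ℝ // 0 < e}) (l : {l : ℝ // 0 < l ∧ l < 1}),
    Filter.principal {y | (μ {ω | nQ ν Q.1 Q.2 (y - x) ω < e.1}).toReal > 1 - l.1}

/-- The `(ε,λ)`-topology on `E` induced by the family `ν`. -/
noncomputable def elTop (ν : ι → E → Ω →ₘ[μ] ℝ) : TopologicalSpace E :=
  .mkOfNhds (elNhd ν)

/-- A net (indexed by a directed preordered type) is Cauchy in the `(ε,λ)`-topology. -/
def ElCauchy (ν : ι → E → Ω →ₘ[μ] ℝ) {J : Type*} [Preorder J] (u : J → E) : Prop :=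
  ∀ (Q : Finset ι) (hQ : Q.Nonempty) (e l : ℝ), 0 < e → 0 < l → l < 1 →
    ∃ j₀, ∀ j k, j₀ ≤ j → j₀ ≤ k →
      (μ {ω | nQ ν Q hQ (u j - u k) ω < e}).toReal > 1 - l

/-- A net converges to `x` in the `(ε,λ)`-topology. -/
def ElLim (ν : ι → E → Ω →ₘ[μ] ℝ) {J : Type*} [Preorder J] (u : J → E) (x : E) : Prop :=
  ∀ (Q : Finset ι) (hQ : Q.Nonempty) (e l : ℝ), 0 < e → 0 < l → l < 1 →
    ∃ j₀, ∀ j, j₀ ≤ j → (μ {ω | nQ ν Q hQ (u j - x) ω < e}).toReal > 1 - l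

/-- `E` is complete in the `(ε,λ)`-topology: every Cauchy net converges. -/
def ElComplete (ν : ι → E → Ω →ₘ[μ] ℝ) : Prop :=
  ∀ (J : Type*) (_ : Preorder J) (_ : IsDirected J (· ≤ ·)) (_ : Nonempty J) (u : J → E),
    ElCauchy ν u → ∃ x, ElLim ν u x

/-- A net is Cauchy in the locally `L⁰`-convex topology `T_c`. -/
def TcCauchy (ν : ι → E → Ω →ₘ[μ] ℝ) {J : Type*} [Preorder J] (u : J → E) : Prop :=
  ∀ (Q : Finset ι) (hQ : Q.Nonempty) (ε : Ω →ₘ[μ] ℝ), L0.StrPos ε →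
    ∃ j₀, ∀ j k, j₀ ≤ j → j₀ ≤ k → nQ ν Q hQ (u j - u k) ≤ ε

/-- A net converges to `x` in the locally `L⁰`-convex topology `T_c`. -/
def TcLim (ν : ι → E → Ω →ₘ[μ] ℝ) {J : Type*} [Preorder J] (u : J → E) (x : E) : Prop :=
  ∀ (Q : Finset ι) (hQ : Q.Nonempty) (ε : Ω →ₘ[μ] ℝ), L0.StrPos ε →
    ∃ j₀, ∀ j, j₀ ≤ j → nQ ν Q hQ (u j - x) ≤ ε

/-- `E` is complete in the locally `L⁰`-convex topology: every Cauchy net converges. -/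
def TcComplete (ν : ι → E → Ω →ₘ[μ] ℝ) : Prop :=
  ∀ (J : Type*) (_ : Preorder J) (_ : IsDirected J (· ≤ ·)) (_ : Nonempty J) (u : J → E),
    TcCauchy ν u → ∃ x, TcLim ν u x

/-- A subset `G` of the `L⁰(F,𝕜)`-module `E` has the countable concatenation property:
every countable concatenation of elements of `G` is well defined and lies in `G`. -/
def HasCCP (μ : Measure Ω) (𝕜 : Type*) [RCLike 𝕜] {E : Type*} [AddCommGroup E]
    [Module (Ω →ₘ[μ] 𝕜) E] (G : Set E) : Prop :=
  ∀ (A : ℕ → Set Ω) (hA : IsMeasPartition A) (x : ℕ → E), (∀ n, x n ∈ G) →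
    ∃ x₀ ∈ G, ∀ n, L0.ind μ 𝕜 (A n) (hA.meas n) • x₀ = L0.ind μ 𝕜 (A n) (hA.meas n) • x n

end Preamble

/-!
Both closures are described by their basic neighbourhoods: `x` is `T_c`-adherent to `G` iff
for all `Q`, `ε` some `y ∈ G` has `‖y - x‖_Q ≤ ε`, and `(ε,λ)`-adherent iff for all `Q`, `e`, `l`
some `y ∈ G` has `P(‖y - x‖_Q < e) > 1 - l`. The first condition trivially implies the second,
and the second forces every `L⁰`-lower bound of `{‖x - y‖_Q : y ∈ G}` to be `≤ 0`.

The way back uses the countable concatenation property. Gluing countably many `y ∈ G` along a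
partition shows that the sets `{‖x - y‖_Q < ε}`, `y ∈ G`, are closed under countable unions up to
null sets, so an exhaustion argument yields `y* ∈ G` whose set contains all the others a.s.
Then `1_{{‖x - y*‖_Q < ε}ᶜ} ε` is a lower bound of `{‖x - y‖_Q : y ∈ G}`, hence `≤ 0`, i.e.
`‖x - y*‖_Q < ε` almost surely.
-/

open Filter Topology

section

variable {Ω : Type*} [MeasurableSpace Ω] {μ : Measure Ω}

theorem MeasureTheory.AEEqFun.coeFn_finset_sup' {ι β : Type*} [TopologicalSpace β] [Lattice β]
    [TopologicalLattice β] {s : Finset ι} (hs : s.Nonempty) (f : ι → Ω →ₘ[μ] β) :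
    ⇑(s.sup' hs f) =ᵐ[μ] fun ω => s.sup' hs fun i => f i ω := by
  induction hs using Finset.Nonempty.cons_induction with
  | singleton a => simp
  | cons a s h hs ih =>
    simp only [Finset.sup'_cons hs]
    filter_upwards [AEEqFun.coeFn_sup (f a) (s.sup' hs f), ih] with ω hsup hs
    rw [hsup, hs]

namespace L0

variable {𝕜 : Type*} [RCLike 𝕜]

theorem coeFn_abs (ξ : Ω →ₘ[μ] 𝕜) : ⇑(L0.abs ξ) =ᵐ[μ] fun ω => ‖ξ ω‖ :=
  AEEqFun.coeFn_comp _ _ _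

theorem coeFn_ind {A : Set Ω} (hA : MeasurableSet A) :
    ⇑(L0.ind μ 𝕜 A hA) =ᵐ[μ] A.indicator 1 :=
  AEEqFun.coeFn_mk _ _

theorem abs_ind {A : Set Ω} (hA : MeasurableSet A) :
    ⇑(L0.abs (L0.ind μ 𝕜 A hA)) =ᵐ[μ] A.indicator 1 := by
  filter_upwards [coeFn_abs (L0.ind μ 𝕜 A hA), coeFn_ind (𝕜 := 𝕜) hA] with ω habs hind
  rw [habs, hind]
  by_cases hω : ω ∈ A <;> simp [hω]

theorem abs_neg_one : L0.abs (-1 : Ω →ₘ[μ] 𝕜) = 1 := by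
  refine AEEqFun.ext ?_
  filter_upwards [coeFn_abs (-1 : Ω →ₘ[μ] 𝕜), AEEqFun.coeFn_neg (1 : Ω →ₘ[μ] 𝕜),
    AEEqFun.coeFn_one (β := 𝕜) (μ := μ), AEEqFun.coeFn_one (β := ℝ) (μ := μ)]
    with ω habs hneg hone hone'
  simp [habs, hneg, hone, hone']

theorem abs_zero : L0.abs (0 : Ω →ₘ[μ] 𝕜) = 0 := by
  refine AEEqFun.ext ?_
  filter_upwards [coeFn_abs (0 : Ω →ₘ[μ] 𝕜), AEEqFun.coeFn_zero (β := 𝕜) (μ := μ),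
    AEEqFun.coeFn_zero (β := ℝ) (μ := μ)] with ω habs hzero hzero'
  simp [habs, hzero, hzero']

theorem strPos_const {c : ℝ} (hc : 0 < c) : L0.StrPos (AEEqFun.const Ω c : Ω →ₘ[μ] ℝ) := by
  filter_upwards [AEEqFun.coeFn_const Ω (μ := μ) c] with ω hω
  exact hω ▸ hc

namespace StrPos

variable {ε δ : Ω →ₘ[μ] ℝ}

theorem nonneg (hε : L0.StrPos ε) : 0 ≤ ε := by
  rw [← AEEqFun.coeFn_le]
  filter_upwards [hε, AEEqFun.coeFn_zero (β := ℝ) (μ := μ)] with ω hpos hzero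
  exact hzero.symm ▸ hpos.le

theorem inf (hε : L0.StrPos ε) (hδ : L0.StrPos δ) : L0.StrPos (ε ⊓ δ) := by
  filter_upwards [hε, hδ, AEEqFun.coeFn_inf ε δ] with ω hεω hδω hinf
  exact hinf ▸ lt_min hεω hδω

theorem half (hε : L0.StrPos ε) : L0.StrPos ((2 : ℝ)⁻¹ • ε) := by
  filter_upwards [hε, AEEqFun.coeFn_smul (2 : ℝ)⁻¹ ε] with ω hεω hsmul
  rw [hsmul, Pi.smul_apply, smul_eq_mul]
  positivity

end StrPos

theorem ae_mem_of_isGLB_zero {S : Set (Ω →ₘ[μ] ℝ)} (hS : IsGLB S 0) {ε : Ω →ₘ[μ] ℝ}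
    (hε : L0.StrPos ε) {s : Set Ω} (hs : MeasurableSet s)
    (h : ∀ c ∈ S, ∀ᵐ ω ∂μ, ω ∉ s → ε ω ≤ c ω) : ∀ᵐ ω ∂μ, ω ∈ s := by
  set c : Ω →ₘ[μ] ℝ := AEEqFun.mk (sᶜ.indicator ε)
    ((AEEqFun.stronglyMeasurable ε).indicator hs.compl).aestronglyMeasurable
  have hc : ⇑c =ᵐ[μ] sᶜ.indicator ε := AEEqFun.coeFn_mk _ _
  have hc_le : c ≤ 0 := hS.2 fun d hd => by
    rw [← AEEqFun.coeFn_le]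
    filter_upwards [hc, h d hd, AEEqFun.coeFn_le.2 (hS.1 hd),
      AEEqFun.coeFn_zero (β := ℝ) (μ := μ)] with ω hcω hεd hd0 hzero
    by_cases hω : ω ∈ s
    · simpa [hcω, hω, hzero] using hd0
    · simpa [hcω, hω] using hεd hω
  filter_upwards [AEEqFun.coeFn_le.2 hc_le, hc, hε, AEEqFun.coeFn_zero (β := ℝ) (μ := μ)]
    with ω hc0 hcω hεω hzero
  by_contra hω
  simp only [hcω, hzero, Set.indicator_of_mem (Set.mem_compl hω)] at hc0
  exact hc0.not_gt hεω

end L0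

end

namespace MeasureTheory

variable {Ω : Type*} [MeasurableSpace Ω] {μ : Measure Ω}

theorem measureReal_mono_ae [IsFiniteMeasure μ] {s t : Set Ω} (h : s ≤ᵐ[μ] t) :
    μ.real s ≤ μ.real t :=
  ENNReal.toReal_mono (measure_ne_top μ t) (measure_mono_ae h)

theorem sub_add_lt_measureReal_inter [IsProbabilityMeasure μ] {s t : Set Ω}
    (ht : MeasurableSet t) {a b : ℝ} (hs : 1 - a < μ.real s) (ht' : 1 - b < μ.real t) :
    1 - (a + b) < μ.real (s ∩ t) := by
  have := measureReal_union_add_inter (s := s) (μ := μ) ht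
  have := measureReal_le_one (μ := μ) (s := s ∪ t)
  linarith

theorem measureReal_eq_one_iff_mem_ae [IsProbabilityMeasure μ] {s : Set Ω}
    (hs : MeasurableSet s) : μ.real s = 1 ↔ s ∈ ae μ := by
  rw [mem_ae_iff_prob_eq_one hs, Measure.real, ENNReal.toReal_eq_one_iff]

theorem ae_mem_of_forall_sub_lt_measureReal [IsProbabilityMeasure μ] {s : Set Ω}
    (hs : MeasurableSet s) (h : ∀ l : ℝ, 0 < l → l < 1 → 1 - l < μ.real s) :
    ∀ᵐ ω ∂μ, ω ∈ s := by
  refine (measureReal_eq_one_iff_mem_ae hs).1 (le_antisymm measureReal_le_one ?_)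
  by_contra! hlt
  have := h ((1 - μ.real s) / 2) (by linarith) (by linarith [measureReal_nonneg (μ := μ) (s := s)])
  linarith

theorem isMeasPartition_disjointed {A : ℕ → Set Ω} (hA : ∀ n, MeasurableSet (A n))
    (hcover : ⋃ n, A n = Set.univ) : IsMeasPartition (disjointed A) :=
  ⟨MeasurableSet.disjointed hA, disjoint_disjointed A, iUnion_disjointed.trans hcover⟩

theorem exists_ae_greatest_of_forall_seq [IsFiniteMeasure μ] {𝒜 : Set (Set Ω)}
    (hne : 𝒜.Nonempty) (hmeas : ∀ s ∈ 𝒜, MeasurableSet s)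
    (hseq : ∀ s : ℕ → Set Ω, (∀ n, s n ∈ 𝒜) → ∃ t ∈ 𝒜, ∀ n, s n ≤ᵐ[μ] t) :
    ∃ t ∈ 𝒜, ∀ s ∈ 𝒜, s ≤ᵐ[μ] t := by
  obtain ⟨m, -, hm_lim, hm_mem⟩ := exists_seq_tendsto_sSup (hne.image μ) (OrderTop.bddAbove _)
  choose s hs𝒜 hsm using hm_mem
  obtain ⟨t, ht𝒜, hst⟩ := hseq s hs𝒜
  have hmax : ∀ u ∈ 𝒜, μ u ≤ μ t := fun u hu =>
    (le_sSup (Set.mem_image_of_mem μ hu)).trans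
      (le_of_tendsto' hm_lim fun n => hsm n ▸ measure_mono_ae (hst n))
  refine ⟨t, ht𝒜, fun u hu => ?_⟩
  obtain ⟨v, hv𝒜, hv⟩ := hseq (fun n => if n = 0 then t else u)
    fun n => by split_ifs <;> assumption
  have htu : μ t + μ (u \ t) ≤ μ t + 0 :=
    calc μ t + μ (u \ t) = μ (t ∪ u) := by
          rw [← measure_union Set.disjoint_sdiff_right ((hmeas u hu).diff (hmeas t ht𝒜)),
            Set.union_sdiff_self]
      _ ≤ μ v := measure_mono_ae (by simpa using (hv 0).union (hv 1))
      _ ≤ μ t + 0 := (hmax v hv𝒜).trans_eq (add_zero _).symm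
  rw [ae_le_set]
  exact nonpos_iff_eq_zero.1 ((ENNReal.add_le_add_iff_left (measure_ne_top μ t)).1 htu)

end MeasureTheory

section TranslationInvariantTopology

variable {X I : Type*} [AddGroup X] {B : I → Set X}

theorem hasBasis_iInf_principal_sub_mem [Nonempty I] (hdir : Directed (· ⊇ ·) B) (x : X) :
    (⨅ i, 𝓟 {y | y - x ∈ B i}).HasBasis (fun _ => True) fun i => {y | y - x ∈ B i} :=
  hasBasis_iInf_principal fun i j =>
    (hdir i j).imp fun _ hk => ⟨fun _ hy => hk.1 hy, fun _ hy => hk.2 hy⟩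

variable {n : X → Filter X} (hn : ∀ x, n x = ⨅ i, 𝓟 {y | y - x ∈ B i})
  (hdir : Directed (· ⊇ ·) B) (hB0 : ∀ i, (0 : X) ∈ B i)
  (hBadd : ∀ i, ∃ j, ∀ a ∈ B j, ∀ b ∈ B j, a + b ∈ B i)
include hn hdir hB0 hBadd

theorem nhds_mkOfNhds_eq_of_translate (x : X) : @nhds X (.mkOfNhds n) x = n x := by
  refine TopologicalSpace.nhds_mkOfNhds n x (fun a => ?_) fun a s hs => ?_
  · simp [hn, hB0]
  rcases isEmpty_or_nonempty I with hI | hI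
  · simp only [hn, iInf_of_empty, mem_top] at hs ⊢
    simp [hs]
  simp only [hn, (hasBasis_iInf_principal_sub_mem hdir _).mem_iff, true_and] at hs ⊢
  obtain ⟨i, hi⟩ := hs
  obtain ⟨j, hj⟩ := hBadd i
  refine mem_of_superset (mem_iInf_of_mem j (mem_principal_self _)) fun y hy => ⟨j, ?_⟩
  exact fun z hz => hi (by simpa using hj _ hz _ hy)

theorem mem_closure_mkOfNhds_iff_of_translate {G : Set X} (hG : G.Nonempty) (x : X) :
    x ∈ @closure X (.mkOfNhds n) G ↔ ∀ i, ∃ y ∈ G, y - x ∈ B i := by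
  let _ := TopologicalSpace.mkOfNhds n
  have hnhds := nhds_mkOfNhds_eq_of_translate hn hdir hB0 hBadd x
  rcases isEmpty_or_nonempty I with hI | hI
  · simpa [mem_closure_iff_nhds, hnhds, hn] using hG
  rw [mem_closure_iff_nhds_basis (hnhds ▸ hn x ▸ hasBasis_iInf_principal_sub_mem hdir x)]
  simp

end TranslationInvariantTopology

section Seminorms

variable {Ω : Type*} [MeasurableSpace Ω] {μ : Measure Ω} {E ι : Type*}
  {ν : ι → E → Ω →ₘ[μ] ℝ}

theorem nQ_coeFn (Q : Finset ι) (hQ : Q.Nonempty) (x : E) :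
    ⇑(nQ ν Q hQ x) =ᵐ[μ] fun ω => Q.sup' hQ fun i => ν i x ω :=
  AEEqFun.coeFn_finset_sup' hQ _

theorem nQ_mono {Q Q' : Finset ι} (hQQ' : Q ⊆ Q') (hQ : Q.Nonempty) (x : E) :
    nQ ν Q hQ x ≤ nQ ν Q' (hQ.mono hQQ') x :=
  Finset.sup'_mono _ hQQ' hQ

theorem measurableSet_nQ_lt (Q : Finset ι) (hQ : Q.Nonempty) (z : E) (e : ℝ) :
    MeasurableSet {ω | nQ ν Q hQ z ω < e} :=
  measurableSet_lt (AEEqFun.measurable _) measurable_const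

theorem measureReal_nQ_lt_mono [IsFiniteMeasure μ] {Q Q' : Finset ι} (hQQ' : Q ⊆ Q')
    (hQ : Q.Nonempty) {e e' : ℝ} (he : e' ≤ e) (z : E) :
    μ.real {ω | nQ ν Q' (hQ.mono hQQ') z ω < e'} ≤ μ.real {ω | nQ ν Q hQ z ω < e} := by
  refine measureReal_mono_ae ?_
  filter_upwards [AEEqFun.coeFn_le.2 (nQ_mono (ν := ν) hQQ' hQ z)] with ω hle hlt
  exact (hle.trans_lt hlt).trans_le he

namespace IsRLCModule

variable {𝕜 : Type*} [RCLike 𝕜] [AddCommGroup E] [Module (Ω →ₘ[μ] 𝕜) E]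
  (hν : IsRLCModule 𝕜 ν)
include hν

theorem map_zero (i : ι) : ν i (0 : E) = 0 := by
  rw [← zero_smul (Ω →ₘ[μ] 𝕜) (0 : E), hν.smul, L0.abs_zero, zero_mul]

theorem map_neg (i : ι) (x : E) : ν i (-x) = ν i x := by
  rw [← neg_one_smul (Ω →ₘ[μ] 𝕜) x, hν.smul, L0.abs_neg_one, one_mul]

theorem ae_eq_on_of_ind_smul_eq {A : Set Ω} (hA : MeasurableSet A) {u v : E}
    (h : L0.ind μ 𝕜 A hA • u = L0.ind μ 𝕜 A hA • v) (i : ι) :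
    ∀ᵐ ω ∂μ, ω ∈ A → ν i u ω = ν i v ω := by
  have hsmul := congrArg (ν i) h
  rw [hν.smul, hν.smul] at hsmul
  filter_upwards [L0.abs_ind (𝕜 := 𝕜) hA, AEEqFun.coeFn_mul (L0.abs (L0.ind μ 𝕜 A hA)) (ν i u),
    AEEqFun.coeFn_mul (L0.abs (L0.ind μ 𝕜 A hA)) (ν i v)] with ω hind hu hv hω
  have hω' : (L0.abs (L0.ind μ 𝕜 A hA) * ν i u) ω = (L0.abs (L0.ind μ 𝕜 A hA) * ν i v) ω := by
    rw [hsmul]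
  rwa [hu, hv, Pi.mul_apply, Pi.mul_apply, hind, Set.indicator_of_mem hω, Pi.one_apply, one_mul,
    one_mul] at hω'

theorem nQ_nonneg (Q : Finset ι) (hQ : Q.Nonempty) (x : E) : 0 ≤ nQ ν Q hQ x :=
  (hν.nonneg _ x).trans (Finset.le_sup' (fun i => ν i x) hQ.choose_spec)

theorem nQ_zero (Q : Finset ι) (hQ : Q.Nonempty) : nQ ν Q hQ (0 : E) = 0 := by
  simp only [nQ, hν.map_zero, Finset.sup'_const]

theorem nQ_sub_comm (Q : Finset ι) (hQ : Q.Nonempty) (x y : E) :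
    nQ ν Q hQ (x - y) = nQ ν Q hQ (y - x) := by
  simp only [nQ, ← neg_sub y x, hν.map_neg]

theorem nQ_add_le (Q : Finset ι) (hQ : Q.Nonempty) (u v : E) :
    ∀ᵐ ω ∂μ, nQ ν Q hQ (u + v) ω ≤ nQ ν Q hQ u ω + nQ ν Q hQ v ω := by
  have hadd : ∀ᵐ ω ∂μ, ∀ i ∈ Q, ν i (u + v) ω ≤ ν i u ω + ν i v ω := by
    refine (Finset.eventually_all Q).2 fun i _ => ?_
    filter_upwards [AEEqFun.coeFn_le.2 (hν.add_le i u v), AEEqFun.coeFn_add (ν i u) (ν i v)]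
      with ω hle hsum
    simpa [hsum] using hle
  filter_upwards [nQ_coeFn Q hQ (u + v), nQ_coeFn Q hQ u, nQ_coeFn Q hQ v, hadd]
    with ω huv hu hv hadd
  rw [huv, hu, hv]
  exact Finset.sup'_le hQ _ fun i hi => (hadd i hi).trans
    (add_le_add (Finset.le_sup' (fun i => ν i u ω) hi) (Finset.le_sup' (fun i => ν i v ω) hi))

theorem nQ_ae_eq_on_of_ind_smul_eq (Q : Finset ι) (hQ : Q.Nonempty) {A : Set Ω}
    (hA : MeasurableSet A) {u v : E} (h : L0.ind μ 𝕜 A hA • u = L0.ind μ 𝕜 A hA • v) :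
    ∀ᵐ ω ∂μ, ω ∈ A → nQ ν Q hQ u ω = nQ ν Q hQ v ω := by
  have hloc := (Finset.eventually_all Q).2 fun i _ => hν.ae_eq_on_of_ind_smul_eq hA h i
  filter_upwards [hloc, nQ_coeFn Q hQ u, nQ_coeFn Q hQ v] with ω hloc hu hv hω
  rw [hu, hv]
  exact Finset.sup'_congr hQ rfl fun i hi => hloc i hi hω

theorem mem_tcClosure_iff {G : Set E} (hG : G.Nonempty) (x : E) :
    x ∈ @closure E (tcTop ν) G ↔
      ∀ (Q : Finset ι) (hQ : Q.Nonempty) (ε : Ω →ₘ[μ] ℝ), L0.StrPos ε →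
        ∃ y ∈ G, nQ ν Q hQ (y - x) ≤ ε := by
  classical
  rw [tcTop, mem_closure_mkOfNhds_iff_of_translate
    (B := fun p : {Q : Finset ι // Q.Nonempty} × {ε : Ω →ₘ[μ] ℝ // L0.StrPos ε} =>
      {z | nQ ν p.1.1 p.1.2 z ≤ p.2.1}) (fun x => by rw [tcNhd, iInf_prod]; rfl) ?_ ?_ ?_ hG]
  · simp [Prod.forall, Subtype.forall]
  · rintro ⟨⟨Q₁, hQ₁⟩, ε₁, hε₁⟩ ⟨⟨Q₂, hQ₂⟩, ε₂, hε₂⟩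
    refine ⟨⟨⟨Q₁ ∪ Q₂, hQ₁.mono Finset.subset_union_left⟩, ε₁ ⊓ ε₂, hε₁.inf hε₂⟩, ?_, ?_⟩
    · exact fun z hz => (nQ_mono Finset.subset_union_left hQ₁ z).trans (hz.trans inf_le_left)
    · exact fun z hz => (nQ_mono Finset.subset_union_right hQ₂ z).trans (hz.trans inf_le_right)
  · rintro ⟨⟨Q, hQ⟩, ε, hε⟩
    simpa [hν.nQ_zero] using hε.nonneg
  · rintro ⟨⟨Q, hQ⟩, ε, hε⟩
    refine ⟨⟨⟨Q, hQ⟩, (2 : ℝ)⁻¹ • ε, hε.half⟩, fun a ha b hb => ?_⟩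
    rw [Set.mem_ofPred_eq, ← AEEqFun.coeFn_le] at ha hb ⊢
    filter_upwards [hν.nQ_add_le Q hQ a b, ha, hb, AEEqFun.coeFn_smul (2 : ℝ)⁻¹ ε]
      with ω hadd haω hbω hsmul
    simp only [hsmul, Pi.smul_apply, smul_eq_mul] at haω hbω
    linarith

theorem mem_elClosure_iff [IsProbabilityMeasure μ] {G : Set E} (hG : G.Nonempty) (x : E) :
    x ∈ @closure E (elTop ν) G ↔
      ∀ (Q : Finset ι) (hQ : Q.Nonempty) (e l : ℝ), 0 < e → 0 < l → l < 1 →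
        ∃ y ∈ G, 1 - l < μ.real {ω | nQ ν Q hQ (y - x) ω < e} := by
  classical
  rw [elTop, mem_closure_mkOfNhds_iff_of_translate
    (B := fun p : {Q : Finset ι // Q.Nonempty} × {e : ℝ // 0 < e} × {l : ℝ // 0 < l ∧ l < 1} =>
      {z | 1 - p.2.2.1 < μ.real {ω | nQ ν p.1.1 p.1.2 z ω < p.2.1.1}})
    (fun x => by simp only [elNhd, iInf_prod]; rfl) ?_ ?_ ?_ hG]
  · simp only [Prod.forall, Subtype.forall, Set.mem_ofPred_eq]
    exact ⟨fun h Q hQ e l he hl hl1 => h Q hQ e he l ⟨hl, hl1⟩,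
      fun h Q hQ e he l hl => h Q hQ e l he hl.1 hl.2⟩
  · rintro ⟨⟨Q₁, hQ₁⟩, ⟨e₁, he₁⟩, ⟨l₁, hl₁⟩⟩ ⟨⟨Q₂, hQ₂⟩, ⟨e₂, he₂⟩, ⟨l₂, hl₂⟩⟩
    refine ⟨⟨⟨Q₁ ∪ Q₂, hQ₁.mono Finset.subset_union_left⟩, ⟨min e₁ e₂, lt_min he₁ he₂⟩,
      ⟨min l₁ l₂, lt_min hl₁.1 hl₂.1, (min_le_left _ _).trans_lt hl₁.2⟩⟩,
      fun z hz => ?_, fun z hz => ?_⟩ <;> simp only [Set.mem_ofPred_eq] at hz ⊢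
    · have := measureReal_nQ_lt_mono (μ := μ) (ν := ν) (Finset.subset_union_left (s₂ := Q₂))
        hQ₁ (min_le_left e₁ e₂) z
      linarith [min_le_left l₁ l₂]
    · have := measureReal_nQ_lt_mono (μ := μ) (ν := ν) (Finset.subset_union_right (s₁ := Q₁))
        hQ₂ (min_le_right e₁ e₂) z
      linarith [min_le_right l₁ l₂]
  · rintro ⟨⟨Q, hQ⟩, ⟨e, he⟩, ⟨l, hl, -⟩⟩
    simp [hν.nQ_zero, he, hl]
  · rintro ⟨⟨Q, hQ⟩, ⟨e, he⟩, ⟨l, hl, hl1⟩⟩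
    refine ⟨⟨⟨Q, hQ⟩, ⟨e / 2, by positivity⟩, ⟨l / 2, by positivity, by linarith⟩⟩,
      fun a ha b hb => ?_⟩
    have hinter := sub_add_lt_measureReal_inter (measurableSet_nQ_lt Q hQ b _) ha hb
    refine (add_halves l ▸ hinter).trans_le (measureReal_mono_ae ?_)
    filter_upwards [hν.nQ_add_le Q hQ a b] with ω hadd hω
    exact hadd.trans_lt ((add_lt_add hω.1 hω.2).trans_eq (add_halves e))

theorem exists_mem_nQ_lt_ae_le_of_hasCCP {G : Set E} (hccp : HasCCP μ 𝕜 G) (x : E)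
    (Q : Finset ι) (hQ : Q.Nonempty) (ε : Ω →ₘ[μ] ℝ) {y : ℕ → E} (hy : ∀ n, y n ∈ G) :
    ∃ z ∈ G, ∀ n, {ω | nQ ν Q hQ (x - y n) ω < ε ω} ≤ᵐ[μ] {ω | nQ ν Q hQ (x - z) ω < ε ω} := by
  set S : ℕ → Set Ω := fun n => {ω | nQ ν Q hQ (x - y n) ω < ε ω}
  have hS : ∀ n, MeasurableSet (S n) := fun n =>
    measurableSet_lt (AEEqFun.measurable _) (AEEqFun.measurable _)
  -- padding every `S n` with `(⋃ k, S k)ᶜ` makes the pieces cover `Ω` without changing them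
  -- on `⋃ k, S k`
  set P := disjointed fun n => S n ∪ (⋃ k, S k)ᶜ
  have hP : IsMeasPartition P := by
    refine isMeasPartition_disjointed (fun n => (hS n).union (MeasurableSet.iUnion hS).compl)
      (Set.eq_univ_of_forall fun ω => ?_)
    by_cases hω : ω ∈ ⋃ k, S k
    · obtain ⟨n, hn⟩ := Set.mem_iUnion.1 hω
      exact Set.mem_iUnion.2 ⟨n, Or.inl hn⟩
    · exact Set.mem_iUnion.2 ⟨0, Or.inr hω⟩
  obtain ⟨z, hzG, hz⟩ := hccp P hP y hy
  have hloc : ∀ᵐ ω ∂μ, ∀ m, ω ∈ P m → nQ ν Q hQ (x - z) ω = nQ ν Q hQ (x - y m) ω :=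
    ae_all_iff.2 fun m => hν.nQ_ae_eq_on_of_ind_smul_eq Q hQ (hP.meas m)
      (by rw [smul_sub, smul_sub, hz m])
  refine ⟨z, hzG, fun n => ?_⟩
  filter_upwards [hloc] with ω hloc hω
  obtain ⟨m, hm⟩ := Set.mem_iUnion.1 (hP.cover.symm ▸ Set.mem_univ ω)
  have hωm : ω ∈ S m :=
    (disjointed_subset _ m hm).resolve_right (not_not.2 (Set.mem_iUnion.2 ⟨n, hω⟩))
  exact (hloc m hm).trans_lt hωm

theorem exists_mem_ae_nQ_lt_of_isGLB [IsFiniteMeasure μ] {G : Set E} (hG : G.Nonempty)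
    (hccp : HasCCP μ 𝕜 G) {x : E} {Q : Finset ι} {hQ : Q.Nonempty}
    (hglb : IsGLB {c | ∃ y ∈ G, c = nQ ν Q hQ (x - y)} 0) {ε : Ω →ₘ[μ] ℝ} (hε : L0.StrPos ε) :
    ∃ y ∈ G, ∀ᵐ ω ∂μ, nQ ν Q hQ (x - y) ω < ε ω := by
  set A : E → Set Ω := fun y => {ω | nQ ν Q hQ (x - y) ω < ε ω}
  have hA : ∀ y, MeasurableSet (A y) := fun y =>
    measurableSet_lt (AEEqFun.measurable _) (AEEqFun.measurable _)
  obtain ⟨_, ⟨y, hyG, rfl⟩, hmax⟩ := exists_ae_greatest_of_forall_seq (hG.image A)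
    (by rintro _ ⟨y, -, rfl⟩; exact hA y) fun s hs => by
      choose y hyG hys using hs
      obtain ⟨z, hzG, hz⟩ := hν.exists_mem_nQ_lt_ae_le_of_hasCCP hccp x Q hQ ε hyG
      exact ⟨A z, ⟨z, hzG, rfl⟩, fun n => by rw [← hys n]; exact hz n⟩
  refine ⟨y, hyG, L0.ae_mem_of_isGLB_zero hglb hε (hA y) ?_⟩
  rintro _ ⟨y', hy', rfl⟩
  filter_upwards [hmax _ ⟨y', hy', rfl⟩] with ω hω hωy
  exact not_lt.1 fun h => hωy (hω h)

variable [IsProbabilityMeasure μ] {G : Set E} (hG : G.Nonempty) {x : E}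
include hG

theorem mem_elClosure_of_mem_tcClosure (hx : x ∈ @closure E (tcTop ν) G) :
    x ∈ @closure E (elTop ν) G := by
  rw [hν.mem_tcClosure_iff hG] at hx
  rw [hν.mem_elClosure_iff hG]
  intro Q hQ e l he hl _
  obtain ⟨y, hyG, hy⟩ := hx Q hQ _ (L0.strPos_const (half_pos he))
  refine ⟨y, hyG, ?_⟩
  have hfull : {ω | nQ ν Q hQ (y - x) ω < e} ∈ ae μ := by
    filter_upwards [AEEqFun.coeFn_le.2 hy, AEEqFun.coeFn_const Ω (μ := μ) (e / 2)]
      with ω hle hconst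
    exact hle.trans_lt (hconst ▸ half_lt_self he)
  rw [(measureReal_eq_one_iff_mem_ae (measurableSet_nQ_lt Q hQ _ e)).2 hfull]
  linarith

theorem isGLB_nQ_of_mem_elClosure (hx : x ∈ @closure E (elTop ν) G) (Q : Finset ι)
    (hQ : Q.Nonempty) : IsGLB {c | ∃ y ∈ G, c = nQ ν Q hQ (x - y)} 0 := by
  rw [hν.mem_elClosure_iff hG] at hx
  refine ⟨?_, fun b hb => ?_⟩
  · rintro _ ⟨y, -, rfl⟩
    exact hν.nQ_nonneg Q hQ _
  have hlt : ∀ δ : ℝ, 0 < δ → ∀ᵐ ω ∂μ, b ω < δ := fun δ hδ =>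
    ae_mem_of_forall_sub_lt_measureReal (measurableSet_lt (AEEqFun.measurable b) measurable_const)
      fun l hl hl1 => by
        obtain ⟨y, hyG, hy⟩ := hx Q hQ δ l hδ hl hl1
        refine hy.trans_le (measureReal_mono_ae ?_)
        filter_upwards [AEEqFun.coeFn_le.2 (hb ⟨y, hyG, rfl⟩)] with ω hbω hω
        exact hbω.trans_lt (hν.nQ_sub_comm Q hQ x y ▸ hω)
  rw [← AEEqFun.coeFn_le]
  filter_upwards [ae_all_iff.2 fun n : ℕ => hlt (1 / (n + 1)) Nat.one_div_pos_of_nat,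
    AEEqFun.coeFn_zero (β := ℝ) (μ := μ)] with ω hω hzero
  rw [hzero]
  exact ge_of_tendsto' tendsto_one_div_add_atTop_nhds_zero_nat fun n => (hω n).le

theorem mem_tcClosure_of_isGLB (hccp : HasCCP μ 𝕜 G)
    (hglb : ∀ (Q : Finset ι) (hQ : Q.Nonempty), IsGLB {c | ∃ y ∈ G, c = nQ ν Q hQ (x - y)} 0) :
    x ∈ @closure E (tcTop ν) G := by
  rw [hν.mem_tcClosure_iff hG]
  intro Q hQ ε hε
  obtain ⟨y, hyG, hy⟩ := hν.exists_mem_ae_nQ_lt_of_isGLB hG hccp (hglb Q hQ) hε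
  refine ⟨y, hyG, hν.nQ_sub_comm Q hQ y x ▸ AEEqFun.coeFn_le.1 ?_⟩
  filter_upwards [hy] with ω hω using hω.le

end IsRLCModule

end Seminorms

/-- **Theorem 3.18.** Let `(E,P)` be a random locally convex module, `x ∈ E` and `G ⊆ E` a
nonempty subset with the countable concatenation property. Then the following are equivalent:
(1) `x` is in the `T_c`-closure of `G`; (2) `x` is in the `(ε,λ)`-closure of `G`;
(3) `d*(x,G) = 0` (equivalently, `0` is the greatest lower bound of `{‖x−y‖_Q : y ∈ G}` for
every finite nonempty `Q`). In particular a subset with the countable concatenation property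
is `T_c`-closed iff it is closed in the `(ε,λ)`-topology. -/
theorem tc_closure_eq_el_closure_of_ccp {Ω : Type*} [MeasurableSpace Ω] {μ : Measure Ω}
    [IsProbabilityMeasure μ] {𝕜 : Type*} [RCLike 𝕜] {E : Type*} [AddCommGroup E]
    [Module (Ω →ₘ[μ] 𝕜) E] {ι : Type*} (ν : ι → E → Ω →ₘ[μ] ℝ) (hν : IsRLCModule 𝕜 ν)
    (x : E) (G : Set E) (hG : G.Nonempty) (hccp : HasCCP μ 𝕜 G) :
    (x ∈ @closure E (tcTop ν) G ↔ x ∈ @closure E (elTop ν) G) ∧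
    (x ∈ @closure E (elTop ν) G ↔
      ∀ (Q : Finset ι) (hQ : Q.Nonempty),
        IsGLB {c | ∃ y ∈ G, c = nQ ν Q hQ (x - y)} 0) ∧
    (@IsClosed E (tcTop ν) G ↔ @IsClosed E (elTop ν) G) := by
  have hcl : @closure E (tcTop ν) G = @closure E (elTop ν) G :=
    Set.ext fun z => ⟨hν.mem_elClosure_of_mem_tcClosure hG,
      fun hz => hν.mem_tcClosure_of_isGLB hG hccp (hν.isGLB_nQ_of_mem_elClosure hG hz)⟩
  refine ⟨by rw [hcl], ⟨hν.isGLB_nQ_of_mem_elClosure hG, fun h => ?_⟩, ?_⟩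
  · exact hcl ▸ hν.mem_tcClosure_of_isGLB hG hccp h
  · rw [← @closure_eq_iff_isClosed E (tcTop ν), ← @closure_eq_iff_isClosed E (elTop ν), hcl]
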